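/- arXiv:2008.05786 — 4 statements merged into one kernel-verified Lean document; each statement's English description precedes it below -/
import Mathlib

section
/- Any two trees on the same number n of vertices have the same Smith normal form of their distance matrices; equivalently, for any two trees T_1 and T_2 on n vertices, the distance matrices D(T_1) and D(T_2) are equivalent over ℤ. -/
open Matrix MvPolynomial

variable {V : Type*}

/-- The distance matrix of a graph: the `(u,v)` entry is the graph distance `d_G(u,v)`. -/
noncomputable def distMatrix [Fintype V] (G : SimpleGraph V) : Matrix V V ℤ :=
  fun u v => (G.dist u v : ℤ)

/-- The transmission of a vertex: the sum of the distances to all vertices. -/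
noncomputable def transmission [Fintype V] (G : SimpleGraph V) (u : V) : ℤ :=
  ∑ v, (G.dist u v : ℤ)

/-- The distance Laplacian matrix `D^L(G) = diag(tr) - D(G)`. -/
noncomputable def distLaplacian [Fintype V] [DecidableEq V] (G : SimpleGraph V) : Matrix V V ℤ :=
  Matrix.diagonal (transmission G) - distMatrix G

/-- The signless distance Laplacian matrix `D^Q(G) = diag(tr) + D(G)`. -/
noncomputable def signlessDistLaplacian [Fintype V] [DecidableEq V] (G : SimpleGraph V) : Matrix V V ℤ :=
  Matrix.diagonal (transmission G) + distMatrix G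

/-- Two integer matrices are equivalent over `ℤ` if `M = U * N * W` with `U`, `W`
invertible over `ℤ` (unimodular). -/
def MatEquivZ [Fintype V] [DecidableEq V] (M N : Matrix V V ℤ) : Prop :=
  ∃ U W : Matrix V V ℤ, IsUnit U.det ∧ IsUnit W.det ∧ M = U * N * W

/-- `f` lists the diagonal entries of the Smith normal form of `M`:
the diagonal matrix `diagonal f` is equivalent to `M` over `ℤ`, consecutive entries
divide each other, and the entries are nonnegative (normalization over `ℤ`). -/
def IsSNF {N : ℕ} (M : Matrix (Fin N) (Fin N) ℤ) (f : Fin N → ℤ) : Prop :=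
  MatEquivZ M (Matrix.diagonal f) ∧ (∀ i j : Fin N, i ≤ j → f i ∣ f j) ∧ ∀ i, 0 ≤ f i

/-- The ideal generated by the determinants of all `k × k` submatrices of `M`. -/
def minorsIdeal {R : Type*} [CommRing R] [Fintype V] (M : Matrix V V R) (k : ℕ) : Ideal R :=
  Ideal.span (Set.range fun p : (Fin k → V) × (Fin k → V) => (M.submatrix p.1 p.2).det)

/-- The generalized distance matrix `D(G, X_G) = diag(X_G) + D(G)` over `ℤ[X_G]`. -/
noncomputable def genDistMatrix [Fintype V] [DecidableEq V] (G : SimpleGraph V) :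
    Matrix V V (MvPolynomial V ℤ) :=
  Matrix.diagonal (fun u => MvPolynomial.X u) +
    (distMatrix G).map (fun a => (a : MvPolynomial V ℤ))

/-- The `k`-th distance ideal `I_k(G, X_G)`: the ideal of `ℤ[X_G]` generated by the
determinants of all `k × k` submatrices of the generalized distance matrix. -/
noncomputable def distIdeal [Fintype V] [DecidableEq V] (G : SimpleGraph V) (k : ℕ) :
    Ideal (MvPolynomial V ℤ) :=
  minorsIdeal (genDistMatrix G) k

/-!
Root the tree at `r`, let `par` send every other vertex to its neighbour one step closer to `r`,
and let `P = 1 - N`, where `N` has a `1` at `(v, par v)` for each `v ≠ r`. Since `par` lowers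
the depth, `P` is unitriangular, hence unimodular. For `u ≠ r` the function
`w ↦ d(u,w) - d(par u,w)` is `±1` and changes value only across the edge `{u, par u}`, so for the
distance matrix `D` the product `P D Pᵀ` is the same matrix for every tree rooted at `r`. Hence
all distance matrices of trees on `n` vertices are congruent, in particular equivalent, to one
matrix.
-/

namespace Matrix

variable {m R : Type*} [Fintype m] [DecidableEq m] [CommRing R]

theorem det_one_sub_eq_one_of_strictlyBlockTriangular {N : Matrix m m R} (b : m → ℕ)
    (hN : ∀ i j, b i ≤ b j → N i j = 0) : (1 - N).det = 1 := by
  have hT : (1 - N).BlockTriangular (OrderDual.toDual ∘ b) := fun i j hij => by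
    have hij : b i < b j := hij
    simp [one_apply_ne (show i ≠ j by rintro rfl; omega), hN i j hij.le]
  rw [hT.det]
  refine Finset.prod_eq_one fun k _ => ?_
  suffices (1 - N).toSquareBlock (OrderDual.toDual ∘ b) k = 1 by rw [this, det_one]
  ext i j
  have hN0 : N i j = 0 := hN i j (OrderDual.toDual.injective (i.2.trans j.2.symm)).le
  simp [toSquareBlock_def, hN0, one_apply, Subtype.ext_iff]

end Matrix

section MatEquivZ

variable [Fintype V] [DecidableEq V] {M N K : Matrix V V ℤ}

theorem MatEquivZ.symm (h : MatEquivZ M N) : MatEquivZ N M := by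
  obtain ⟨U, W, hU, hW, rfl⟩ := h
  refine ⟨U⁻¹, W⁻¹, isUnit_nonsing_inv_det U hU, isUnit_nonsing_inv_det W hW, ?_⟩
  simp only [← Matrix.mul_assoc, nonsing_inv_mul U hU, Matrix.one_mul]
  rw [Matrix.mul_assoc, mul_nonsing_inv W hW, Matrix.mul_one]

theorem MatEquivZ.trans (h₁ : MatEquivZ M N) (h₂ : MatEquivZ N K) : MatEquivZ M K := by
  obtain ⟨U, W, hU, hW, rfl⟩ := h₁
  obtain ⟨U', W', hU', hW', rfl⟩ := h₂
  refine ⟨U * U', W' * W, by rw [det_mul]; exact hU.mul hU', by rw [det_mul]; exact hW'.mul hW,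
    by simp only [Matrix.mul_assoc]⟩

end MatEquivZ

section ParentMatrix

variable {R : Type*} [DecidableEq V]

def parentMatrix [Zero R] [One R] (r : V) (par : V → V) : Matrix V V R :=
  fun u a => if u ≠ r ∧ a = par u then 1 else 0

variable [Fintype V] {r : V} {par : V → V}

theorem one_sub_parentMatrix_mul_apply [Ring R] (M : Matrix V V R) (u w : V) :
    ((1 - parentMatrix r par : Matrix V V R) * M) u w =
      M u w - if u = r then 0 else M (par u) w := by
  rw [Matrix.sub_mul, Matrix.one_mul, Matrix.sub_apply]
  by_cases hu : u = r <;> simp [mul_apply, parentMatrix, hu]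

theorem mul_transpose_one_sub_parentMatrix_apply [Ring R] (M : Matrix V V R) (u w : V) :
    (M * (1 - parentMatrix r par : Matrix V V R)ᵀ) u w =
      M u w - if w = r then 0 else M u (par w) := by
  rw [transpose_sub, transpose_one, Matrix.mul_sub, Matrix.mul_one, Matrix.sub_apply]
  by_cases hw : w = r <;> simp [mul_apply, parentMatrix, hw]

theorem det_one_sub_parentMatrix [CommRing R] (depth : V → ℕ)
    (hpar : ∀ v, v ≠ r → depth (par v) < depth v) :
    (1 - parentMatrix r par : Matrix V V R).det = 1 :=
  det_one_sub_eq_one_of_strictlyBlockTriangular depth fun u a hle => by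
    simp only [parentMatrix, ite_eq_right_iff, and_imp]
    rintro hu rfl
    exact absurd hle (hpar u hu).not_ge

end ParentMatrix

namespace SimpleGraph

variable {G : SimpleGraph V} {a b c d : V}

theorem Connected.exists_adj_dist_add_one_eq (hG : G.Connected) {r v : V} (hv : v ≠ r) :
    ∃ x, G.Adj v x ∧ G.dist r x + 1 = G.dist r v := by
  obtain ⟨p, hp⟩ := hG.exists_walk_length_eq_dist v r
  cases p with
  | nil => exact absurd rfl hv
  | @cons _ x _ hvx p =>
    refine ⟨x, hvx, ?_⟩
    have hxr : G.dist x r ≤ p.length := dist_le p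
    have hrv : G.dist r v ≤ G.dist r x + G.dist x v := hG.dist_triangle
    rw [dist_eq_one_iff_adj.mpr hvx.symm] at hrv
    rw [Walk.length_cons] at hp
    rw [dist_comm (u := r) (v := x), dist_comm (u := r) (v := v)] at *
    omega

theorem IsTree.edge_eq_of_dist_crossing (hG : G.IsTree) (hab : G.Adj a b) (hcd : G.Adj c d)
    (hbc : G.dist b c = G.dist a c + 1) (had : G.dist a d = G.dist a c + 1)
    (hbd : G.dist b d = G.dist a c) : s(a, b) = s(c, d) := by
  classical
  obtain ⟨S, hS, hSl⟩ := hG.connected.exists_path_of_dist a c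
  obtain ⟨R, hR, hRl⟩ := hG.connected.exists_path_of_dist b d
  have hbS : b ∉ S.support := fun h => by
    have := dist_le (S.dropUntil b h)
    have := S.length_dropUntil_le_length h
    omega
  have hcR : c ∉ R.support := fun h => by
    have := dist_le (R.takeUntil c h)
    have := R.length_takeUntil_le_length h
    omega
  -- otherwise `R` followed by the edge `dc` would be a second path from `b` to `c`
  have hd : d ∈ (Walk.cons hab.symm S).support :=
    hG.isAcyclic.mem_support_of_ne_mem_support_of_adj_of_isPath (hS.cons hbS) hR hcd hcR
  rcases List.mem_cons.mp (Walk.support_cons _ _ ▸ hd) with rfl | hdS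
  · obtain rfl : a = c := hG.connected.dist_eq_zero_iff.mp (by simpa using hbd.symm)
    rfl
  · have := dist_le (S.takeUntil d hdS)
    have := S.length_takeUntil_le_length hdS
    omega

/-- `x` lies on `a`'s side of the edge `ab` iff `d(x,b) = d(x,a) + 1`; the two ends of any other
edge lie on the same side. -/
theorem IsTree.dist_eq_add_one_of_adj_of_ne_edge (hG : G.IsTree) (hab : G.Adj a b)
    (hcd : G.Adj c d) (he : s(a, b) ≠ s(c, d)) (hc : G.dist c b = G.dist c a + 1) :
    G.dist d b = G.dist d a + 1 := by
  rcases hG.dist_eq_dist_add_one_of_adj d hab with hd | hd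
  · refine absurd (hG.edge_eq_of_dist_crossing hab hcd ?_ ?_ ?_) he <;>
    rcases hG.dist_eq_dist_add_one_of_adj a hcd with ha | ha <;>
    rcases hG.dist_eq_dist_add_one_of_adj b hcd with hb | hb <;>
    simp only [dist_comm (u := c), dist_comm (u := d)] at * <;> omega
  · exact hd

theorem IsTree.dist_sub_dist_eq_of_adj (hG : G.IsTree) (hab : G.Adj a b) (hcd : G.Adj c d)
    (he : s(a, b) ≠ s(c, d)) :
    (G.dist a c : ℤ) - G.dist b c = G.dist a d - G.dist b d := by
  rcases hG.dist_eq_dist_add_one_of_adj c hab with hc | hc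
  · have := hG.dist_eq_add_one_of_adj_of_ne_edge hab.symm hcd (by rwa [Sym2.eq_swap]) hc
    simp only [dist_comm (u := c), dist_comm (u := d)] at *
    omega
  · have := hG.dist_eq_add_one_of_adj_of_ne_edge hab hcd he hc
    simp only [dist_comm (u := c), dist_comm (u := d)] at *
    omega

end SimpleGraph

def treeDistNormalForm [DecidableEq V] (r : V) : Matrix V V ℤ :=
  fun u w => if u = r then (if w = r then 0 else 1)
    else if w = r then 1 else if u = w then -2 else 0

namespace SimpleGraph

variable [Fintype V] [DecidableEq V] {G : SimpleGraph V}

theorem IsTree.congr_distMatrix_eq_treeDistNormalForm (hG : G.IsTree) {r : V} {par : V → V}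
    (hpar : ∀ v, v ≠ r → G.Adj v (par v) ∧ G.dist r (par v) + 1 = G.dist r v) :
    (1 - parentMatrix r par) * distMatrix G * (1 - parentMatrix r par)ᵀ =
      treeDistNormalForm r := by
  ext u w
  rw [mul_transpose_one_sub_parentMatrix_apply, one_sub_parentMatrix_mul_apply,
    one_sub_parentMatrix_mul_apply]
  simp only [distMatrix, treeDistNormalForm]
  by_cases hu : u = r <;> by_cases hw : w = r
  · simp [hu, hw]
  · have := (hpar w hw).2
    simp only [hu, hw, if_true, if_false]
    omega
  · have := (hpar u hu).2
    simp only [hu, hw, if_true, if_false, dist_comm (v := r)]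
    omega
  · simp only [hu, hw, if_false]
    by_cases huw : u = w
    · subst huw
      simp [dist_eq_one_iff_adj.mpr (hpar u hu).1, dist_eq_one_iff_adj.mpr (hpar u hu).1.symm]
    · have hedge : s(u, par u) ≠ s(w, par w) := by
        have := (hpar u hu).2
        have := (hpar w hw).2
        rw [Ne, Sym2.eq_iff]
        rintro (⟨rfl, -⟩ | ⟨rfl, hw'⟩)
        · exact huw rfl
        · rw [hw'] at this
          omega
      have := hG.dist_sub_dist_eq_of_adj (hpar u hu).1 (hpar w hw).1 hedge
      simp only [huw, if_false]
      omega

theorem IsTree.matEquivZ_treeDistNormalForm (hG : G.IsTree) (r : V) :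
    MatEquivZ (treeDistNormalForm r) (distMatrix G) := by
  have hpar : ∀ v, ∃ x, v ≠ r → G.Adj v x ∧ G.dist r x + 1 = G.dist r v := fun v =>
    if hv : v = r then ⟨v, fun h => absurd hv h⟩
    else (hG.connected.exists_adj_dist_add_one_eq hv).imp fun _ hx _ => hx
  choose par hpar using hpar
  have hdet : (1 - parentMatrix r par : Matrix V V ℤ).det = 1 :=
    det_one_sub_parentMatrix (G.dist r) fun v hv => by have := (hpar v hv).2; omega
  have hunit : IsUnit (1 - parentMatrix r par : Matrix V V ℤ).det := hdet ▸ isUnit_one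
  exact ⟨_, _, hunit, by rwa [det_transpose],
    (hG.congr_distMatrix_eq_treeDistNormalForm hpar).symm⟩

end SimpleGraph


/-- Any two trees on the same number of vertices have the same Smith normal
form of their distance matrices; equivalently, their distance matrices are equivalent
over `ℤ`. -/
theorem trees_distMatrix_coinvariant (n : ℕ) (T₁ T₂ : SimpleGraph (Fin n))
    (h₁ : T₁.IsTree) (h₂ : T₂.IsTree) :
    MatEquivZ (distMatrix T₁) (distMatrix T₂) := by
  obtain ⟨r⟩ := h₁.nonempty
  exact (h₁.matEquivZ_treeDistNormalForm r).symm.trans (h₂.matEquivZ_treeDistNormalForm r)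
end

section
/- Star graphs are determined by the Smith normal form of the distance Laplacian matrix: if G is a connected graph on n ≥ 2 vertices whose distance Laplacian matrix D^L(G) is equivalent over ℤ to the distance Laplacian matrix D^L(K_{1,n-1}) of the star graph K_{1,n-1}, then G is isomorphic to K_{1,n-1}. -/
open Matrix MvPolynomial

variable {V : Type*}

/-- The star graph `K_{1,n-1}` on `Fin n`: vertex `0` is the center, adjacent to all
other vertices, and all other pairs are nonadjacent. -/
def starGraph (n : ℕ) : SimpleGraph (Fin n) where
  Adj u v := ¬ (((u : ℕ) = 0) ↔ ((v : ℕ) = 0))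
  symm := ⟨fun _ _ h h' => h h'.symm⟩
  loopless := ⟨fun _ h => h Iff.rfl⟩

/-! The star's distance Laplacian has rank one modulo `q = 2n - 1`: its entries are
`-1, -2` (row of the centre, row of a leaf) times `n, 1` (column of the centre, column of a
leaf). Equivalence over `ℤ` preserves this, so every `2 × 2` minor of `D^L(G)` is divisible
by `q`. The minor on rows `u, v` and columns `u, w` gives `q ∣ tr(u) d(v,w) + d(u,v) d(u,w)`
for distinct `u, v, w`. Along a geodesic this forces diameter at most `2`, hence
`tr(u) ≤ 2n - 3 < q - 1`; then the same divisibility around an edge `uv` makes `G`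
triangle-free with `v` adjacent to every non-neighbour of `u`, and forbids a vertex with two
neighbours and a non-neighbour (it would give `q ∣ 3`). So some vertex is adjacent to all
others, and its neighbours are independent. -/

def IsOuterProductMod {l m : Type*} (q : ℕ) (M : Matrix l m ℤ) : Prop :=
  ∃ (a : l → ZMod q) (b : m → ZMod q), M.map (Int.castRingHom (ZMod q)) = vecMulVec a b

section OuterProductMod

variable {k l m p : Type*} {q : ℕ}

theorem IsOuterProductMod.mul_mul [Fintype l] [Fintype m] {M : Matrix l m ℤ}
    (hM : IsOuterProductMod q M) (U : Matrix k l ℤ) (W : Matrix m p ℤ) :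
    IsOuterProductMod q (U * M * W) := by
  obtain ⟨a, b, hab⟩ := hM
  refine ⟨U.map (Int.castRingHom _) *ᵥ a, b ᵥ* W.map (Int.castRingHom _), ?_⟩
  rw [Matrix.map_mul, Matrix.map_mul, hab, mul_vecMulVec, vecMulVec_mul]

theorem IsOuterProductMod.dvd_mul_sub_mul {M : Matrix l m ℤ} (hM : IsOuterProductMod q M)
    (u v : l) (w x : m) : (q : ℤ) ∣ M u w * M v x - M u x * M v w := by
  obtain ⟨a, b, hab⟩ := hM
  have hentry (i : l) (j : m) : (M i j : ZMod q) = a i * b j := by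
    simpa [vecMulVec_apply] using congrFun₂ hab i j
  rw [← ZMod.intCast_zmod_eq_zero_iff_dvd]
  push_cast [hentry]
  ring

end OuterProductMod

namespace SimpleGraph

variable {G : SimpleGraph V}

theorem dist_eq_two_of_adj_of_adj {u v w : V} (huw : u ≠ w) (hnadj : ¬G.Adj u w)
    (huv : G.Adj u v) (hvw : G.Adj v w) : G.dist u w = 2 := by
  let p : G.Walk u w := .cons huv (.cons hvw .nil)
  have hlt := p.reachable.one_lt_dist_of_ne_of_not_adj huw hnadj
  have hle : G.dist u w ≤ 2 := dist_le p
  omega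

theorem Walk.dist_getVert_of_length_eq_dist {u v : V} {p : G.Walk u v}
    (hp : p.length = G.dist u v) {i : ℕ} (hi : i ≤ p.length) : G.dist u (p.getVert i) = i := by
  rw [← length_eq_dist_of_subwalk hp (p.isSubwalk_take i), Walk.take_length]
  omega

theorem exists_adj_dist_eq_of_lt_dist {u v : V} {k : ℕ} (hk : k < G.dist u v) :
    ∃ y z, G.Adj y z ∧ G.dist u y = k ∧ G.dist u z = k + 1 := by
  obtain ⟨p, hp⟩ := exists_walk_of_dist_ne_zero (G := G) (u := u) (v := v) (by omega)
  exact ⟨_, _, p.adj_getVert_succ (by omega), p.dist_getVert_of_length_eq_dist hp (by omega),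
    p.dist_getVert_of_length_eq_dist hp (by omega)⟩

end SimpleGraph

section DistLaplacian

open SimpleGraph

variable [Fintype V] [DecidableEq V] {G : SimpleGraph V}

theorem distLaplacian_apply_self (u : V) : distLaplacian G u u = transmission G u := by
  simp [distLaplacian, distMatrix]

theorem distLaplacian_apply_of_ne {u v : V} (h : u ≠ v) :
    distLaplacian G u v = -(G.dist u v : ℤ) := by
  simp [distLaplacian, distMatrix, h]

theorem transmission_le_of_dist_le_two {u w : V} (hdiam : ∀ v, G.dist u v ≤ 2)
    (hw : G.Adj u w) : transmission G u ≤ 2 * Fintype.card V - 3 := by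
  have hle (v : V) :
      (G.dist u v : ℤ) ≤ 2 - (if v = u then 2 else 0) - (if v = w then 1 else 0) := by
    by_cases hvu : v = u
    · subst hvu
      simp [hw.ne]
    by_cases hvw : v = w
    · subst hvw
      simp [hvu, dist_eq_one_iff_adj.2 hw]
    simpa [hvu, hvw] using hdiam v
  calc transmission G u
      ≤ ∑ v, (2 - (if v = u then 2 else 0) - (if v = w then 1 else 0) : ℤ) :=
        Finset.sum_le_sum fun v _ => hle v
    _ = 2 * Fintype.card V - 3 := by
        simp only [Finset.sum_sub_distrib, Finset.sum_const, Finset.sum_ite_eq',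
          Finset.mem_univ, if_true, Finset.card_univ, nsmul_eq_mul]
        ring

variable {q : ℕ}

theorem IsOuterProductMod.dvd_transmission_mul_dist_add
    (hM : IsOuterProductMod q (distLaplacian G)) {u v w : V}
    (huv : u ≠ v) (huw : u ≠ w) (hvw : v ≠ w) :
    (q : ℤ) ∣ transmission G u * G.dist v w + G.dist u v * G.dist u w := by
  have h := hM.dvd_mul_sub_mul u v u w
  rw [distLaplacian_apply_self, distLaplacian_apply_of_ne hvw, distLaplacian_apply_of_ne huw,
    distLaplacian_apply_of_ne huv.symm, SimpleGraph.dist_comm (u := v) (v := u)] at h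
  rw [← Int.dvd_neg]
  convert h using 1
  ring

theorem IsOuterProductMod.dist_le_two (hM : IsOuterProductMod q (distLaplacian G))
    (hqV : 2 * Fintype.card V - 1 ≤ q) (u v : V) : G.dist u v ≤ 2 := by
  by_contra! h
  obtain ⟨y₁, z₁, hyz₁, hy₁, hz₁⟩ :=
    exists_adj_dist_eq_of_lt_dist (k := 1) (by omega : 1 < G.dist u v)
  obtain ⟨y₂, z₂, hyz₂, hy₂, hz₂⟩ := exists_adj_dist_eq_of_lt_dist (k := 2) h
  have hne {x : V} (hx : G.dist u x ≠ 0) : u ≠ x := by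
    rintro rfl
    simp at hx
  have h₁ := hM.dvd_transmission_mul_dist_add (hne (by omega)) (hne (by omega)) hyz₁.ne
  have h₂ := hM.dvd_transmission_mul_dist_add (hne (by omega)) (hne (by omega)) hyz₂.ne
  rw [dist_eq_one_iff_adj.2 hyz₁, hy₁, hz₁] at h₁
  rw [dist_eq_one_iff_adj.2 hyz₂, hy₂, hz₂] at h₂
  have h4 : (q : ℤ) ∣ 4 := by
    convert Int.dvd_sub h₂ h₁ using 1
    push_cast
    ring
  have hcard : 2 < Fintype.card V :=
    Fintype.two_lt_card_iff.2 ⟨u, y₁, z₁, hne (by omega), hne (by omega), hyz₁.ne⟩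
  have := Int.le_of_dvd (by norm_num) h4
  omega

theorem IsOuterProductMod.not_dvd_transmission_add_one
    (hM : IsOuterProductMod q (distLaplacian G)) (hqV : 2 * Fintype.card V - 1 ≤ q)
    {u w : V} (hw : G.Adj u w) : ¬(q : ℤ) ∣ transmission G u + 1 := by
  intro hdvd
  have hle := transmission_le_of_dist_le_two (hM.dist_le_two hqV u) hw
  have hpos : 0 ≤ transmission G u := Finset.sum_nonneg fun _ _ => by positivity
  have := Int.le_of_dvd (by omega) hdvd
  omega

theorem IsOuterProductMod.not_adj_of_adj_of_adj (hM : IsOuterProductMod q (distLaplacian G))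
    (hqV : 2 * Fintype.card V - 1 ≤ q) {u v w : V} (huv : G.Adj u v) (huw : G.Adj u w)
    (hvw : v ≠ w) : ¬G.Adj v w := by
  intro hadj
  have h := hM.dvd_transmission_mul_dist_add huv.ne huw.ne hvw
  rw [dist_eq_one_iff_adj.2 hadj, dist_eq_one_iff_adj.2 huv, dist_eq_one_iff_adj.2 huw] at h
  exact hM.not_dvd_transmission_add_one hqV huv (by simpa using h)

theorem IsOuterProductMod.dist_eq_two_of_not_adj (hM : IsOuterProductMod q (distLaplacian G))
    (hG : G.Connected) (hqV : 2 * Fintype.card V - 1 ≤ q) {u v : V} (huv : u ≠ v)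
    (hnadj : ¬G.Adj u v) : G.dist u v = 2 :=
  le_antisymm (hM.dist_le_two hqV u v) (hG.one_lt_dist_of_ne_of_not_adj huv hnadj)

theorem IsOuterProductMod.adj_of_adj_of_not_adj (hM : IsOuterProductMod q (distLaplacian G))
    (hG : G.Connected) (hq : Odd q) (hqV : 2 * Fintype.card V - 1 ≤ q) {u v w : V}
    (huv : G.Adj u v) (hwu : w ≠ u) (hnuw : ¬G.Adj u w) : G.Adj v w := by
  by_contra hnvw
  have hvw : v ≠ w := by
    rintro rfl
    exact hnuw huv
  have h := hM.dvd_transmission_mul_dist_add huv.ne hwu.symm hvw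
  rw [hM.dist_eq_two_of_not_adj hG hqV hvw hnvw, hM.dist_eq_two_of_not_adj hG hqV hwu.symm hnuw,
    dist_eq_one_iff_adj.2 huv] at h
  obtain ⟨r, rfl⟩ := hq
  have hcop : IsCoprime ((2 * r + 1 : ℕ) : ℤ) 2 := ⟨1, -r, by push_cast; ring⟩
  have h2 : ((2 * r + 1 : ℕ) : ℤ) ∣ 2 * (transmission G u + 1) := by
    convert h using 1
    push_cast
    ring
  exact hM.not_dvd_transmission_add_one hqV huv (hcop.dvd_of_dvd_mul_left h2)

theorem IsOuterProductMod.eq_of_adj_of_adj (hM : IsOuterProductMod q (distLaplacian G))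
    (hG : G.Connected) (hq : Odd q) (hqV : 2 * Fintype.card V - 1 ≤ q) {u v w x : V}
    (huv : G.Adj u v) (huw : G.Adj u w) (hxu : x ≠ u) (hnux : ¬G.Adj u x) : v = w := by
  by_contra hvw
  have hvx := hM.adj_of_adj_of_not_adj hG hq hqV huv hxu hnux
  have hvw' := hM.dvd_transmission_mul_dist_add huv.ne huw.ne hvw
  have hvx' := hM.dvd_transmission_mul_dist_add huv.ne hxu.symm hvx.ne
  rw [hM.dist_eq_two_of_not_adj hG hqV hvw (hM.not_adj_of_adj_of_adj hqV huv huw hvw),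
    dist_eq_one_iff_adj.2 huv, dist_eq_one_iff_adj.2 huw] at hvw'
  rw [hM.dist_eq_two_of_not_adj hG hqV hxu.symm hnux, dist_eq_one_iff_adj.2 huv,
    dist_eq_one_iff_adj.2 hvx] at hvx'
  have h3 : (q : ℤ) ∣ 3 := by
    convert Int.dvd_sub (Int.dvd_mul_of_dvd_right (b := 2) hvx') hvw' using 1
    push_cast
    ring
  have hcard : 2 < Fintype.card V := Fintype.two_lt_card_iff.2 ⟨u, v, w, huv.ne, huw.ne, hvw⟩
  have := Int.le_of_dvd (by norm_num) h3
  omega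

theorem IsOuterProductMod.exists_forall_adj_iff [Nontrivial V]
    (hM : IsOuterProductMod q (distLaplacian G)) (hG : G.Connected) (hq : Odd q)
    (hqV : 2 * Fintype.card V - 1 ≤ q) : ∃ c, ∀ x y, G.Adj x y ↔ ¬(x = c ↔ y = c) := by
  suffices ∃ c, ∀ x, x ≠ c → G.Adj c x by
    obtain ⟨c, hc⟩ := this
    refine ⟨c, fun x y => ?_⟩
    by_cases hx : x = c <;> by_cases hy : y = c
    · simp [hx, hy]
    · simp [hx, hy, hc y hy]
    · simp [hx, hy, (hc x hx).symm]
    · simp only [hx, hy, iff_self, not_true_eq_false, iff_false]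
      exact fun hxy => hM.not_adj_of_adj_of_adj hqV (hc x hx) (hc y hy) hxy.ne hxy
  obtain ⟨u, -⟩ := exists_pair_ne V
  obtain ⟨v, huv⟩ := hG.preconnected.exists_adj_of_nontrivial u
  by_cases hu : ∀ x, x ≠ u → G.Adj u x
  · exact ⟨u, hu⟩
  simp only [not_forall] at hu
  obtain ⟨x, hxu, hnux⟩ := hu
  refine ⟨v, fun y hyv => ?_⟩
  by_cases hyu : y = u
  · exact hyu ▸ huv.symm
  refine hM.adj_of_adj_of_not_adj hG hq hqV huv hyu fun huy => hyv ?_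
  exact hM.eq_of_adj_of_adj hG hq hqV huy huv hxu hnux

end DistLaplacian

section StarGraph

variable {n : ℕ} [NeZero n]

theorem starGraph_adj {u v : Fin n} : (starGraph n).Adj u v ↔ ¬(u = 0 ↔ v = 0) := by
  simp [starGraph, Fin.val_eq_zero_iff]

theorem starGraph_dist (u v : Fin n) :
    (starGraph n).dist u v = if u = v then 0 else if u = 0 ∨ v = 0 then 1 else 2 := by
  by_cases huv : u = v
  · simp [huv]
  by_cases h0 : u = 0 ∨ v = 0
  · rw [if_neg huv, if_pos h0, SimpleGraph.dist_eq_one_iff_adj, starGraph_adj]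
    rcases h0 with rfl | rfl <;> simp_all [eq_comm]
  · rw [not_or] at h0
    rw [if_neg huv, if_neg (by tauto)]
    exact SimpleGraph.dist_eq_two_of_adj_of_adj huv (by simp [starGraph_adj, h0.1, h0.2])
      (v := 0) (by simp [starGraph_adj, h0.1]) (by simp [starGraph_adj, h0.2])

theorem starGraph_transmission (u : Fin n) :
    transmission (starGraph n) u = if u = 0 then (n : ℤ) - 1 else 2 * n - 3 := by
  rcases eq_or_ne u 0 with rfl | hu
  · have hdist (v : Fin n) : ((starGraph n).dist 0 v : ℤ) = 1 - if v = 0 then 1 else 0 := by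
      rw [starGraph_dist]
      rcases eq_or_ne v 0 with rfl | hv
      · simp
      · simp [hv, hv.symm]
    simp [transmission, hdist, Finset.sum_sub_distrib]
  · have hdist (v : Fin n) : ((starGraph n).dist u v : ℤ) =
        2 - (if v = u then 2 else 0) - (if v = 0 then 1 else 0) := by
      rw [starGraph_dist]
      rcases eq_or_ne v u with rfl | hvu
      · simp [hu]
      rcases eq_or_ne v 0 with rfl | hv
      · simp [hu, hvu]
      · simp [hu, hv, hvu, hvu.symm]
    simp [transmission, hdist, Finset.sum_sub_distrib, hu]
    ring

theorem distLaplacian_starGraph_map {R : Type*} [CommRing R] (h2n : (2 * n : R) = 1) :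
    (distLaplacian (starGraph n)).map (Int.castRingHom R) =
      vecMulVec (fun u => if u = 0 then -1 else -2) (fun v => if v = 0 then (n : R) else 1) := by
  ext u v
  rw [map_apply, vecMulVec_apply, eq_intCast]
  rcases eq_or_ne u v with rfl | huv
  · rw [distLaplacian_apply_self, starGraph_transmission]
    split_ifs <;> push_cast <;> linear_combination h2n
  · rw [distLaplacian_apply_of_ne huv, starGraph_dist, if_neg huv]
    by_cases hu : u = 0 <;> by_cases hv : v = 0
    · exact absurd (hu.trans hv.symm) huv
    · simp [hu, hv]
    · simp [hu, hv]
      linear_combination -h2n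
    · simp [hu, hv]

theorem isOuterProductMod_distLaplacian_starGraph :
    IsOuterProductMod (2 * n - 1) (distLaplacian (starGraph n)) := by
  have hq : ((2 * n - 1 : ℕ) : ZMod (2 * n - 1)) = 0 := ZMod.natCast_self _
  have h2n : (2 * n : ZMod (2 * n - 1)) = 1 := by
    rw [Nat.cast_sub (by have := NeZero.one_le (n := n); omega)] at hq
    push_cast at hq
    linear_combination hq
  exact ⟨_, _, distLaplacian_starGraph_map h2n⟩

theorem nonempty_iso_starGraph_of_adj_iff {G : SimpleGraph (Fin n)} (c : Fin n)
    (hc : ∀ x y, G.Adj x y ↔ ¬(x = c ↔ y = c)) : Nonempty (G ≃g starGraph n) :=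
  ⟨⟨Equiv.swap c 0, by simp [starGraph_adj, hc, Equiv.swap_apply_eq_iff]⟩⟩

end StarGraph

/-- Star graphs are determined by the SNF of the distance Laplacian matrix:
if `G` is a connected graph on `n ≥ 2` vertices whose distance Laplacian matrix is
equivalent over `ℤ` to that of the star `K_{1,n-1}`, then `G` is isomorphic to
`K_{1,n-1}`. -/
theorem starGraph_determined_by_snf_distLaplacian (n : ℕ) (hn : 2 ≤ n)
    (G : SimpleGraph (Fin n)) (hG : G.Connected)
    (h : MatEquivZ (distLaplacian G) (distLaplacian (starGraph n))) :
    Nonempty (G ≃g starGraph n) := by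
  have : NeZero n := ⟨by omega⟩
  have : Nontrivial (Fin n) := Fin.nontrivial_iff_two_le.2 hn
  obtain ⟨U, W, -, -, hUW⟩ := h
  have hM : IsOuterProductMod (2 * n - 1) (distLaplacian G) :=
    hUW ▸ isOuterProductMod_distLaplacian_starGraph.mul_mul U W
  obtain ⟨c, hc⟩ := hM.exists_forall_adj_iff hG ⟨n - 1, by omega⟩ (by simp)
  exact nonempty_iso_starGraph_of_adj_iff c hc
end

section
/- For the complete bipartite graph K_{m,1} (the star) with m ≥ 2, with variables x_1,…,x_m for the vertices in the part of size m and y_1 for the center, the second distance ideal is I_2(K_{m,1}, {x_1,…,x_m,y_1}) = ⟨x_1 − 2, …, x_m − 2, 2y_1 − 1⟩ in ℤ[x_1,…,x_m,y_1]. -/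
open Matrix MvPolynomial

variable {V : Type*}

/-!
Modulo `J = ⟨x_i - 2, 2y - 1⟩` the generalized distance matrix of the star becomes the
outer product of `(2, …, 2, 1)` and `(1, …, 1, y)` (the leaf–centre entries `1 = 2y`), so it
has rank one and all its `2 × 2` minors lie in `J`. Conversely, for leaves `i ≠ j` the minors on rows
`(i, j)`, columns `(i, centre)` and on rows `(i, centre)`, columns `(j, centre)` are exactly
`x_i - 2` and `2y - 1`.
-/

namespace SimpleGraph

variable {α β : Type*}

@[simp]
lemma completeBipartiteGraph_dist_inl_inr (a : α) (b : β) :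
    (completeBipartiteGraph α β).dist (.inl a) (.inr b) = 1 :=
  dist_eq_one_iff_adj.mpr (by simp)

@[simp]
lemma completeBipartiteGraph_dist_inr_inl (a : α) (b : β) :
    (completeBipartiteGraph α β).dist (.inr b) (.inl a) = 1 :=
  dist_eq_one_iff_adj.mpr (by simp)

@[simp]
lemma completeBipartiteGraph_dist_inl_inl [Nonempty β] {a a' : α} (h : a ≠ a') :
    (completeBipartiteGraph α β).dist (.inl a) (.inl a') = 2 := by
  obtain ⟨b⟩ := ‹Nonempty β›
  have hedist : (completeBipartiteGraph α β).edist (.inl a) (.inl a') = 2 :=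
    edist_eq_two_iff.mpr
      ⟨by simpa using h, by simp, ⟨.inr b, by simp [mem_commonNeighbors]⟩⟩
  rw [dist, hedist]
  rfl

end SimpleGraph

section GenDistMatrix

variable [Fintype V] [DecidableEq V] (G : SimpleGraph V)

@[simp]
lemma genDistMatrix_apply_self (u : V) : genDistMatrix G u u = X u := by
  simp [genDistMatrix, distMatrix]

lemma genDistMatrix_apply_of_ne {u v : V} (h : u ≠ v) :
    genDistMatrix G u v = (G.dist u v : MvPolynomial V ℤ) := by
  simp [genDistMatrix, distMatrix, h]

end GenDistMatrix

section MinorsIdeal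

variable {R : Type*} [CommRing R] [Fintype V]

lemma det_submatrix_mem_minorsIdeal (M : Matrix V V R) {k : ℕ} (p q : Fin k → V) :
    (M.submatrix p q).det ∈ minorsIdeal M k :=
  Ideal.subset_span ⟨(p, q), rfl⟩

lemma sub_mem_minorsIdeal_two (M : Matrix V V R) (a b c d : V) :
    M a c * M b d - M a d * M b c ∈ minorsIdeal M 2 := by
  have h := det_submatrix_mem_minorsIdeal M ![a, b] ![c, d]
  rwa [det_fin_two] at h

lemma minorsIdeal_le_ker_of_map_eq_vecMulVec {S : Type*} [CommRing S] (M : Matrix V V R)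
    (f : R →+* S) {r c : V → S} (h : M.map f = vecMulVec r c) {k : ℕ} (hk : 2 ≤ k) :
    minorsIdeal M k ≤ RingHom.ker f := by
  have : Nontrivial (Fin k) := Fin.nontrivial_iff_two_le.mpr hk
  rw [minorsIdeal, Ideal.span_le]
  rintro _ ⟨⟨p, q⟩, rfl⟩
  rw [SetLike.mem_coe, RingHom.mem_ker, RingHom.map_det, RingHom.mapMatrix_apply,
    ← submatrix_map, h]
  exact det_vecMulVec _ _

end MinorsIdeal

lemma star_genDistMatrix_map_eq_vecMulVec {m : ℕ} {S : Type*} [CommRing S]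
    (f : MvPolynomial (Fin m ⊕ Fin 1) ℤ →+* S)
    (hx : ∀ i, f (X (.inl i)) = 2) (hy : 2 * f (X (.inr 0)) = 1) :
    (genDistMatrix (completeBipartiteGraph (Fin m) (Fin 1))).map f =
      vecMulVec (Sum.elim (fun _ => 2) (fun _ => 1))
        (Sum.elim (fun _ => 1) (fun _ => f (X (.inr 0)))) := by
  ext (i | k) (j | l)
  · by_cases hij : i = j
    · subst hij
      simp [hx, vecMulVec_apply]
    · simp [genDistMatrix_apply_of_ne, hij, vecMulVec_apply, map_ofNat]
  · simp [genDistMatrix_apply_of_ne, Fin.fin_one_eq_zero l, hy, vecMulVec_apply]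
  · simp [genDistMatrix_apply_of_ne, vecMulVec_apply]
  · obtain rfl := Fin.fin_one_eq_zero k
    obtain rfl := Fin.fin_one_eq_zero l
    simp [vecMulVec_apply]

/-- For the star `K_{m,1}` with `m ≥ 2`, with variables `x_i` for the
vertices of the part of size `m` and `y₁` for the center, the second distance ideal is
`⟨x₁ - 2, …, x_m - 2, 2y₁ - 1⟩`. -/
theorem distIdeal_two_star (m : ℕ) (hm : 2 ≤ m) :
    distIdeal (completeBipartiteGraph (Fin m) (Fin 1)) 2 =
      Ideal.span
        ((Set.range fun i : Fin m =>
            (MvPolynomial.X (Sum.inl i) : MvPolynomial (Fin m ⊕ Fin 1) ℤ) - 2) ∪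
          {2 * MvPolynomial.X (Sum.inr (0 : Fin 1)) - 1}) := by
  have : Nontrivial (Fin m) := Fin.nontrivial_iff_two_le.mpr hm
  set J := Ideal.span ((Set.range fun i : Fin m =>
      (X (Sum.inl i) : MvPolynomial (Fin m ⊕ Fin 1) ℤ) - 2) ∪ {2 * X (Sum.inr 0) - 1})
  apply le_antisymm
  · have hx (i : Fin m) : Ideal.Quotient.mk J (X (.inl i)) = 2 := by
      rw [← map_ofNat (Ideal.Quotient.mk J), Ideal.Quotient.mk_eq_mk_iff_sub_mem]
      exact Ideal.subset_span (.inl ⟨i, rfl⟩)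
    have hy : 2 * Ideal.Quotient.mk J (X (.inr 0)) = 1 := by
      rw [← map_ofNat (Ideal.Quotient.mk J), ← map_mul, ← map_one (Ideal.Quotient.mk J),
        Ideal.Quotient.mk_eq_mk_iff_sub_mem]
      exact Ideal.subset_span (.inr rfl)
    exact (minorsIdeal_le_ker_of_map_eq_vecMulVec _ _
      (star_genDistMatrix_map_eq_vecMulVec _ hx hy) le_rfl).trans_eq Ideal.mk_ker
  · rw [Ideal.span_le]
    rintro _ (⟨i, rfl⟩ | rfl) <;> rw [SetLike.mem_coe, distIdeal]
    · obtain ⟨j, hji⟩ := exists_ne i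
      convert sub_mem_minorsIdeal_two (genDistMatrix (completeBipartiteGraph (Fin m) (Fin 1)))
        (.inl i) (.inl j) (.inl i) (.inr 0) using 1
      simp [genDistMatrix_apply_of_ne, hji]
    · obtain ⟨i, j, hij⟩ := exists_pair_ne (Fin m)
      convert sub_mem_minorsIdeal_two (genDistMatrix (completeBipartiteGraph (Fin m) (Fin 1)))
        (.inl i) (.inr 0) (.inl j) (.inr 0) using 1
      simp [genDistMatrix_apply_of_ne, hij]
end

section
/- Let G be a connected graph on n vertices. The Smith normal form of the signless distance Laplacian matrix D^Q(G) has at most one invariant factor equal to 1 if and only if G is a complete graph and n ≠ 3. -/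
open Matrix MvPolynomial

variable {V : Type*}

/-! Reducing modulo a prime `p` commutes with unimodular equivalence and preserves rank, so at
most one invariant factor of `D^Q(G)` equals `1` iff `D^Q(G)` has rank at most `1` over `ZMod p`
for some prime `p` (take `p` dividing the second invariant factor). Rank at most `1` makes every
`2 × 2` minor vanish. If `G` is not complete, take `u ~ w ~ v` with `d(u, v) = 2`: three minors
give `tr u = 2`, `2 tr w = 1` and row `w` = `tr w` · row `u`, and comparing the row sums `2 tr`
yields `1 = 2`. For `K₃` a single minor reads `1 · 1 = 1 · 2`. For `Kₙ` with `n ≠ 3`, modulo a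
prime dividing `n - 2` every entry, including `tr = n - 1`, is `1`, so the matrix has rank one. -/

namespace Matrix

variable {m n R : Type*} [Fintype n] [CommRing R] [IsDomain R]

theorem mul_eq_mul_of_rank_le_one {A : Matrix m n R} (hA : A.rank ≤ 1) (a b : m) (c d : n) :
    A a c * A b d = A a d * A b c := by
  by_contra hne
  have hdet : (A.submatrix ![a, b] ![c, d]).det ≠ 0 := by
    rw [det_fin_two]
    simpa [sub_eq_zero] using hne
  have := (rank_of_det_ne_zero hdet).symm.trans_le ((A.rank_submatrix_le _ _).trans hA)
  simp at this

end Matrix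

theorem MatEquivZ.rank_map_eq {ι K : Type*} [Fintype ι] [DecidableEq ι] [CommRing K]
    {M N : Matrix ι ι ℤ} (h : MatEquivZ M N) (φ : ℤ →+* K) :
    (M.map φ).rank = (N.map φ).rank := by
  obtain ⟨U, W, hU, hW, rfl⟩ := h
  have hU' : IsUnit (U.map φ).det := RingHom.map_det φ U ▸ hU.map φ
  have hW' : IsUnit (W.map φ).det := RingHom.map_det φ W ▸ hW.map φ
  rw [Matrix.map_mul, Matrix.map_mul, rank_mul_eq_left_of_isUnit_det _ _ hW',
    rank_mul_eq_right_of_isUnit_det _ _ hU']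

namespace IsSNF

variable {N : ℕ} {M : Matrix (Fin N) (Fin N) ℤ} {f : Fin N → ℤ}

theorem apply_one_ne_one_of_card_le_one (hf : IsSNF M f) (hN : 1 < N)
    (hcard : Nat.card {i : Fin N // f i = 1} ≤ 1) : f ⟨1, hN⟩ ≠ 1 := by
  intro h1
  have h0 : f ⟨0, by omega⟩ = 1 :=
    Int.eq_one_of_dvd_one (hf.2.2 _) (h1 ▸ hf.2.1 _ _ (Fin.mk_le_mk.mpr zero_le_one))
  have := (Finite.card_le_one_iff_subsingleton.mp hcard).elim ⟨_, h0⟩ ⟨_, h1⟩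
  simp at this

theorem card_eq_one_le_one_iff_exists_prime_rank_le_one (hf : IsSNF M f) :
    Nat.card {i : Fin N // f i = 1} ≤ 1 ↔
      ∃ p : ℕ, p.Prime ∧ (M.map (Int.castRingHom (ZMod p))).rank ≤ 1 := by
  constructor
  · intro hcard
    rcases le_or_gt N 1 with hN | hN
    · exact ⟨2, Nat.prime_two, (rank_le_card_width _).trans (by simpa using hN)⟩
    have hf1 : (f ⟨1, hN⟩).natAbs ≠ 1 := by
      have := hf.2.2 ⟨1, hN⟩
      have := hf.apply_one_ne_one_of_card_le_one hN hcard
      omega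
    obtain ⟨p, hp, hpf⟩ := Nat.exists_prime_and_dvd hf1
    have : Fact p.Prime := ⟨hp⟩
    have hsupport (i : Fin N) (hi : (f i : ZMod p) ≠ 0) : i = ⟨0, by omega⟩ := by
      by_contra hi0
      refine hi ((ZMod.intCast_zmod_eq_zero_iff_dvd _ _).mpr ?_)
      refine (Int.natCast_dvd.mpr hpf).trans (hf.2.1 _ _ ?_)
      rw [Fin.le_def]
      exact Nat.one_le_iff_ne_zero.mpr fun h => hi0 (Fin.ext h)
    refine ⟨p, hp, ?_⟩
    rw [hf.1.rank_map_eq, diagonal_map (map_zero _), rank_diagonal]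
    refine Fintype.card_le_one_iff.mpr fun i j => Subtype.ext ?_
    exact (hsupport i i.2).trans (hsupport j j.2).symm
  · rintro ⟨p, hp, hrank⟩
    have : Fact p.Prime := ⟨hp⟩
    rw [hf.1.rank_map_eq] at hrank
    refine Finite.card_le_one_iff_subsingleton.mpr ⟨fun ⟨i, hi⟩ ⟨j, hj⟩ => Subtype.ext ?_⟩
    by_contra hij
    have := mul_eq_mul_of_rank_le_one hrank i j i j
    simp [diagonal_apply_ne _ hij, diagonal_apply_ne _ (Ne.symm hij), hi, hj] at this

end IsSNF

namespace SimpleGraph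

variable {G : SimpleGraph V}

theorem Connected.exists_adj_adj_dist_eq_two (hG : G.Connected) (hG_top : G ≠ ⊤) :
    ∃ u w v, G.Adj u w ∧ G.Adj w v ∧ G.dist u v = 2 := by
  obtain ⟨a, b, hab, hnadj⟩ : ∃ a b, a ≠ b ∧ ¬G.Adj a b := by
    by_contra! h
    exact hG_top (eq_top_iff.mpr fun a b hab => h a b hab)
  have hdist : 1 < G.dist a b := by
    have := hG.pos_dist_of_ne hab
    have : G.dist a b ≠ 1 := fun h => hnadj (dist_eq_one_iff_adj.mp h)
    omega
  obtain ⟨p, hp⟩ := (hG a b).exists_walk_length_eq_dist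
  obtain ⟨u, w, v, huw, hwv, huv, hne⟩ := p.exists_adj_adj_not_adj_ne hp hdist
  refine ⟨u, w, v, huw, hwv, ?_⟩
  have : G.edist u v = 2 := edist_eq_two_iff.mpr ⟨hne, huv, w, huw, hwv.symm⟩
  simp [dist, this]

end SimpleGraph

section SignlessDistLaplacian

variable [Fintype V] [DecidableEq V] {G : SimpleGraph V}

theorem signlessDistLaplacian_apply_self (a : V) :
    signlessDistLaplacian G a a = transmission G a := by
  simp [signlessDistLaplacian, distMatrix]

theorem signlessDistLaplacian_apply_of_ne {a b : V} (h : a ≠ b) :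
    signlessDistLaplacian G a b = G.dist a b := by
  simp [signlessDistLaplacian, distMatrix, h]

theorem sum_signlessDistLaplacian_apply (a : V) :
    ∑ b, signlessDistLaplacian G a b = 2 * transmission G a := by
  simp [signlessDistLaplacian, distMatrix, Finset.sum_add_distrib, transmission, two_mul,
    diagonal_apply]

theorem transmission_top (a : V) :
    transmission (⊤ : SimpleGraph V) a = Fintype.card V - 1 := by
  have : 0 < Fintype.card V := Fintype.card_pos_iff.mpr ⟨a⟩
  simp [transmission, SimpleGraph.dist_top, Finset.sum_ite, Finset.filter_ne, Nat.cast_pred this]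

theorem SimpleGraph.Connected.one_lt_rank_signlessDistLaplacian_of_ne_top (hG : G.Connected)
    (hG_top : G ≠ ⊤) (p : ℕ) [Fact p.Prime] :
    1 < ((signlessDistLaplacian G).map (Int.castRingHom (ZMod p))).rank := by
  by_contra! hrank
  set A := (signlessDistLaplacian G).map (Int.castRingHom (ZMod p))
  have minor := mul_eq_mul_of_rank_le_one hrank
  obtain ⟨u, w, v, huw, hwv, huv⟩ := hG.exists_adj_adj_dist_eq_two hG_top
  have hne : u ≠ v := by rintro rfl; simp at huv
  have off {a b : V} (h : a ≠ b) : A a b = G.dist a b := by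
    simp [A, signlessDistLaplacian_apply_of_ne h]
  have adj {a b : V} (h : G.Adj a b) : A a b = 1 := by
    simp [off h.ne, SimpleGraph.dist_eq_one_iff_adj.mpr h]
  have row_sum (a : V) : ∑ b, A a b = 2 * A a a := by
    simpa [A, signlessDistLaplacian_apply_self] using
      congrArg (Int.cast : ℤ → ZMod p) (sum_signlessDistLaplacian_apply (G := G) a)
  have hAuv : A u v = 2 := by simp [off hne, huv]
  have hAvu : A v u = 2 := by simp [off hne.symm, G.dist_comm, huv]
  have hAuu : A u u = 2 := by
    simpa [adj huw, adj hwv.symm, hAvu, eq_comm] using minor u v w u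
  have hAww : 2 * A w w = 1 := by
    simpa [adj huw, adj hwv, hAuv, eq_comm] using minor u w w v
  have hrow (b : V) : A w b = A w w * A u b := by
    simpa [adj huw] using minor w u b w
  have hsum : 2 * A w w = A w w * (2 * A u u) := by
    rw [← row_sum, ← row_sum, Finset.mul_sum]
    exact Finset.sum_congr rfl fun b _ => hrow b
  exact one_ne_zero (by linear_combination -hsum - 2 * A w w * hAuu - hAww : (1 : ZMod p) = 0)

theorem one_lt_rank_signlessDistLaplacian_top_of_card_eq_three (hV : Fintype.card V = 3)
    (p : ℕ) [Fact p.Prime] :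
    1 < ((signlessDistLaplacian (⊤ : SimpleGraph V)).map (Int.castRingHom (ZMod p))).rank := by
  by_contra! hrank
  obtain ⟨a, b, c, hab, hac, hbc, -⟩ := Finset.card_eq_three.mp (Finset.card_univ.trans hV)
  have := mul_eq_mul_of_rank_le_one hrank a b b c
  simp [signlessDistLaplacian_apply_of_ne, signlessDistLaplacian_apply_self,
    SimpleGraph.dist_top_of_ne, transmission_top, hV, hab, hac, hbc] at this
  exact one_ne_zero (by linear_combination -this : (1 : ZMod p) = 0)

theorem exists_prime_rank_signlessDistLaplacian_top_le_one (hV : Fintype.card V ≠ 3) :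
    ∃ p : ℕ, p.Prime ∧
      ((signlessDistLaplacian (⊤ : SimpleGraph V)).map (Int.castRingHom (ZMod p))).rank ≤ 1 := by
  rcases le_or_gt (Fintype.card V) 1 with hV1 | hV1
  · exact ⟨2, Nat.prime_two, (rank_le_card_width _).trans hV1⟩
  obtain ⟨p, hp, hpV⟩ := Nat.exists_prime_and_dvd (n := Fintype.card V - 2) (by omega)
  have : Fact p.Prime := ⟨hp⟩
  suffices h : (signlessDistLaplacian (⊤ : SimpleGraph V)).map (Int.castRingHom (ZMod p)) =
      vecMulVec 1 1 from ⟨p, hp, h ▸ rank_vecMulVec_le _ _⟩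
  ext a b
  rcases eq_or_ne a b with rfl | hab
  · have : ((Fintype.card V - 2 : ℕ) : ZMod p) = 0 := (ZMod.natCast_eq_zero_iff _ _).mpr hpV
    push_cast [Nat.cast_sub (show 2 ≤ Fintype.card V from hV1)] at this
    simp [signlessDistLaplacian_apply_self, transmission_top, vecMulVec_apply]
    linear_combination this
  · simp [signlessDistLaplacian_apply_of_ne hab, SimpleGraph.dist_top_of_ne hab, vecMulVec_apply]

theorem SimpleGraph.Connected.exists_prime_rank_signlessDistLaplacian_le_one_iff
    (hG : G.Connected) :
    (∃ p : ℕ, p.Prime ∧ ((signlessDistLaplacian G).map (Int.castRingHom (ZMod p))).rank ≤ 1) ↔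
      G = ⊤ ∧ Fintype.card V ≠ 3 := by
  constructor
  · rintro ⟨p, hp, hrank⟩
    have : Fact p.Prime := ⟨hp⟩
    by_cases hG_top : G = ⊤
    · subst hG_top
      refine ⟨rfl, fun hV => ?_⟩
      exact hrank.not_gt (one_lt_rank_signlessDistLaplacian_top_of_card_eq_three hV p)
    · exact (hrank.not_gt (hG.one_lt_rank_signlessDistLaplacian_of_ne_top hG_top p)).elim
  · rintro ⟨rfl, hV⟩
    exact exists_prime_rank_signlessDistLaplacian_top_le_one hV

end SignlessDistLaplacian

/-- For a connected graph `G` on `n` vertices, the Smith normal form of its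
signless distance Laplacian matrix has at most one invariant factor equal to `1` if and
only if `G` is a complete graph and `n ≠ 3`. -/
theorem signlessDistLaplacian_at_most_one_invariantFactor_one_iff (n : ℕ)
    (G : SimpleGraph (Fin n)) (hG : G.Connected) (f : Fin n → ℤ)
    (hf : IsSNF (signlessDistLaplacian G) f) :
    Nat.card {i : Fin n // f i = 1} ≤ 1 ↔ (G = ⊤ ∧ n ≠ 3) := by
  rw [hf.card_eq_one_le_one_iff_exists_prime_rank_le_one,
    hG.exists_prime_rank_signlessDistLaplacian_le_one_iff, Fintype.card_fin]
end
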